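/- arXiv:gr-qc/9411046 — 5 statements merged into one kernel-verified Lean document; each statement's English description precedes it below -/
import Mathlib

section
/- Let Cyl(X̄) denote the unital star-subalgebra of C(X̄, ℂ) consisting of the cylindrical functions on the projective limit X̄ of a compact Hausdorff projective family. The map which assigns to each point x ∈ X̄ the evaluation homomorphism Cyl(X̄) → ℂ, f ↦ f(x), is a bijection from X̄ onto the set of all sup-norm-continuous unital star-algebra homomorphisms from Cyl(X̄) to ℂ. -/
/-- The projective limit of a projective family, as a subspace of the product space. -/
def ProjLim {L : Type*} [PartialOrder L] (X : L → Type*)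
    (p : ∀ S S', S ≤ S' → X S' → X S) : Type _ :=
  {x : ∀ S, X S // ∀ S S' (h : S ≤ S'), p S S' h (x S') = x S}

/-- The Tychonov (subspace-of-product) topology on the projective limit. -/
instance {L : Type*} [PartialOrder L] (X : L → Type*) [∀ S, TopologicalSpace (X S)]
    (p : ∀ S S', S ≤ S' → X S' → X S) : TopologicalSpace (ProjLim X p) :=
  inferInstanceAs (TopologicalSpace {x : ∀ S, X S // ∀ S S' (h : S ≤ S'), p S S' h (x S') = x S})

/-- A cylindrical function on the projective limit: a function of the form `f ∘ p_S`
for some `S ∈ L` and some continuous `f : X S → ℂ`. -/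
def IsCyl {L : Type*} [PartialOrder L] (X : L → Type*) [∀ S, TopologicalSpace (X S)]
    (p : ∀ S S', S ≤ S' → X S' → X S) (F : ProjLim X p → ℂ) : Prop :=
  ∃ (S : L) (f : X S → ℂ), Continuous f ∧ F = fun x => f (x.1 S)

/-- The set `Cyl(X̄)` of cylindrical functions, as a type. -/
def Cyl {L : Type*} [PartialOrder L] (X : L → Type*) [∀ S, TopologicalSpace (X S)]
    (p : ∀ S S', S ≤ S' → X S' → X S) : Type _ :=
  {F : ProjLim X p → ℂ // IsCyl X p F}

/-- The evaluation map: a point `x ∈ X̄` gives the homomorphism `Cyl(X̄) → ℂ`, `F ↦ F x`. -/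
def evalAt {L : Type*} [PartialOrder L] (X : L → Type*) [∀ S, TopologicalSpace (X S)]
    (p : ∀ S S', S ≤ S' → X S' → X S) (x : ProjLim X p) : Cyl X p → ℂ :=
  fun F => F.1 x

/-- `h : Cyl(X̄) → ℂ` is a sup-norm-continuous unital star-algebra homomorphism:
it sends 1 to 1, is additive, multiplicative, ℂ-homogeneous, star-preserving, and
(uniformly) continuous for the supremum norm. -/
def IsContStarHom {L : Type*} [PartialOrder L] (X : L → Type*) [∀ S, TopologicalSpace (X S)]
    (p : ∀ S S', S ≤ S' → X S' → X S) (h : Cyl X p → ℂ) : Prop :=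
  (∀ F : Cyl X p, (∀ x, F.1 x = 1) → h F = 1) ∧
  (∀ F G K : Cyl X p, (∀ x, K.1 x = F.1 x + G.1 x) → h K = h F + h G) ∧
  (∀ F G K : Cyl X p, (∀ x, K.1 x = F.1 x * G.1 x) → h K = h F * h G) ∧
  (∀ (c : ℂ) (F K : Cyl X p), (∀ x, K.1 x = c * F.1 x) → h K = c * h F) ∧
  (∀ F K : Cyl X p, (∀ x, K.1 x = starRingEnd ℂ (F.1 x)) → h K = starRingEnd ℂ (h F)) ∧
  (∀ ε : ℝ, 0 < ε → ∃ δ : ℝ, 0 < δ ∧ ∀ F G : Cyl X p,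
    (∀ x, ‖F.1 x - G.1 x‖ ≤ δ) → ‖h F - h G‖ ≤ ε)

/-!
Each level `X_S` is compact Hausdorff, so by Gelfand duality every character of `C(X_S, ℂ)` is
evaluation at a unique point. A homomorphism `h` on `Cyl(X̄)` restricts along `f ↦ f ∘ p_S` to
a character of `C(X_S, ℂ)`, hence to a point `x_S ∈ X_S`; testing against `f ∘ p_{SS'}` and
using that continuous functions separate points shows that these points form a thread, i.e. a
point of `X̄`, and `h` is evaluation at it.
-/

namespace ContinuousMap

variable {Y 𝕜 : Type*} [TopologicalSpace Y] [CompactSpace Y] [T2Space Y] [RCLike 𝕜]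

open WeakDual.CharacterSpace in
theorem eq_of_forall_apply_eq {a b : Y} (h : ∀ f : C(Y, 𝕜), f a = f b) : a = b :=
  (continuousMapEval_bijective Y 𝕜).1 <| Subtype.ext <| ContinuousLinearMap.ext h

open WeakDual WeakDual.CharacterSpace in
theorem exists_apply_eq_algHom (φ : C(Y, 𝕜) →ₐ[𝕜] 𝕜) : ∃ y : Y, ∀ f : C(Y, 𝕜), f y = φ f := by
  obtain ⟨y, hy⟩ := (continuousMapEval_bijective Y 𝕜).2 (equivAlgHom.symm φ)
  exact ⟨y, fun f => congrArg (fun ψ : characterSpace 𝕜 C(Y, 𝕜) => ψ f) hy⟩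

end ContinuousMap

noncomputable section ProjLim

variable {L : Type*} [PartialOrder L] {X : L → Type*} [∀ S, TopologicalSpace (X S)]
  {p : ∀ S S', S ≤ S' → X S' → X S}

def Cyl.ofContinuousMap (S : L) (f : C(X S, ℂ)) : Cyl X p :=
  ⟨fun x => f (x.1 S), S, f, f.continuous, rfl⟩

theorem Cyl.exists_eq_ofContinuousMap (F : Cyl X p) :
    ∃ S f, F = Cyl.ofContinuousMap S f := by
  obtain ⟨S, f, hf, hF⟩ := F.2
  exact ⟨S, ⟨f, hf⟩, Subtype.ext hF⟩

theorem Cyl.ofContinuousMap_comp (hp_cont : ∀ S S' (h : S ≤ S'), Continuous (p S S' h))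
    {S S' : L} (hle : S ≤ S') (f : C(X S, ℂ)) :
    Cyl.ofContinuousMap (p := p) S' (f.comp ⟨p S S' hle, hp_cont S S' hle⟩) =
      Cyl.ofContinuousMap S f :=
  Subtype.ext <| funext fun x => congrArg f (x.2 S S' hle)

theorem isContStarHom_evalAt (x : ProjLim X p) : IsContStarHom X p (evalAt X p x) :=
  ⟨fun _ hF => hF x, fun _ _ _ hK => hK x, fun _ _ _ hK => hK x, fun _ _ _ hK => hK x,
    fun _ _ hK => hK x, fun ε hε => ⟨ε, hε, fun _ _ hFG => hFG x⟩⟩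

theorem evalAt_injective [∀ S, CompactSpace (X S)] [∀ S, T2Space (X S)] :
    Function.Injective (evalAt X p) := fun _ _ hxy =>
  Subtype.ext <| funext fun S => ContinuousMap.eq_of_forall_apply_eq (𝕜 := ℂ) fun f =>
    congrFun hxy (Cyl.ofContinuousMap S f)

namespace IsContStarHom

variable {h : Cyl X p → ℂ}

def toAlgHom (hh : IsContStarHom X p h) (S : L) : C(X S, ℂ) →ₐ[ℂ] ℂ where
  toFun f := h (Cyl.ofContinuousMap S f)
  map_one' := hh.1 _ fun _ => rfl
  map_mul' _ _ := hh.2.2.1 _ _ _ fun _ => rfl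
  map_zero' := by
    simpa using hh.2.2.2.1 0 (Cyl.ofContinuousMap S 0) _ fun _ => (zero_mul _).symm
  map_add' _ _ := hh.2.1 _ _ _ fun _ => rfl
  commutes' c := by
    simpa [hh.1 (Cyl.ofContinuousMap S 1) fun _ => rfl] using
      hh.2.2.2.1 c (Cyl.ofContinuousMap S 1) (Cyl.ofContinuousMap S (algebraMap ℂ _ c))
        fun _ => (mul_one c).symm

variable [∀ S, CompactSpace (X S)] [∀ S, T2Space (X S)]

def levelPoint (hh : IsContStarHom X p h) (S : L) : X S :=
  (ContinuousMap.exists_apply_eq_algHom (hh.toAlgHom S)).choose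

theorem apply_levelPoint (hh : IsContStarHom X p h) {S : L} (f : C(X S, ℂ)) :
    f (hh.levelPoint S) = h (Cyl.ofContinuousMap S f) :=
  (ContinuousMap.exists_apply_eq_algHom (hh.toAlgHom S)).choose_spec f

theorem map_levelPoint (hh : IsContStarHom X p h)
    (hp_cont : ∀ S S' (h : S ≤ S'), Continuous (p S S' h)) (S S' : L) (hle : S ≤ S') :
    p S S' hle (hh.levelPoint S') = hh.levelPoint S :=
  ContinuousMap.eq_of_forall_apply_eq (𝕜 := ℂ) fun f => by
    change f.comp ⟨p S S' hle, hp_cont S S' hle⟩ (hh.levelPoint S') = _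
    rw [hh.apply_levelPoint, hh.apply_levelPoint, Cyl.ofContinuousMap_comp hp_cont]

def point (hh : IsContStarHom X p h)
    (hp_cont : ∀ S S' (h : S ≤ S'), Continuous (p S S' h)) : ProjLim X p :=
  ⟨hh.levelPoint, hh.map_levelPoint hp_cont⟩

theorem evalAt_point (hh : IsContStarHom X p h)
    (hp_cont : ∀ S S' (h : S ≤ S'), Continuous (p S S' h)) :
    evalAt X p (hh.point hp_cont) = h := by
  funext F
  obtain ⟨S, f, rfl⟩ := F.exists_eq_ofContinuousMap
  exact hh.apply_levelPoint f

end IsContStarHom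

end ProjLim

theorem evalAt_bijective_onto_spectrum_general
    {L : Type*} [PartialOrder L]
    (X : L → Type*) [∀ S, TopologicalSpace (X S)]
    [∀ S, CompactSpace (X S)] [∀ S, T2Space (X S)]
    (p : ∀ S S', S ≤ S' → X S' → X S)
    (hp_cont : ∀ S S' (h : S ≤ S'), Continuous (p S S' h)) :
    (∀ x : ProjLim X p, IsContStarHom X p (evalAt X p x)) ∧
    Function.Injective (evalAt X p) ∧
    (∀ h : Cyl X p → ℂ, IsContStarHom X p h → ∃ x : ProjLim X p, evalAt X p x = h) :=
  ⟨isContStarHom_evalAt, evalAt_injective,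
    fun _ hh => ⟨hh.point hp_cont, hh.evalAt_point hp_cont⟩⟩

/-- The evaluation map `x ↦ (F ↦ F x)` is a bijection from the projective
limit `X̄` onto the set of sup-norm-continuous unital star-algebra homomorphisms from
`Cyl(X̄)` to `ℂ` (Gel'fand spectrum). -/
theorem evalAt_bijective_onto_spectrum
    {L : Type*} [PartialOrder L] [IsDirected L (· ≤ ·)] [Nonempty L]
    (X : L → Type*) [∀ S, TopologicalSpace (X S)]
    [∀ S, CompactSpace (X S)] [∀ S, T2Space (X S)] [∀ S, Nonempty (X S)]
    (p : ∀ S S', S ≤ S' → X S' → X S)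
    (hp_cont : ∀ S S' (h : S ≤ S'), Continuous (p S S' h))
    (hp_surj : ∀ S S' (h : S ≤ S'), Function.Surjective (p S S' h))
    (hp_id : ∀ S, p S S le_rfl = id)
    (hp_comp : ∀ S S' S'' (h : S ≤ S') (h' : S' ≤ S''),
      p S S' h ∘ p S' S'' h' = p S S'' (h.trans h')) :
    (∀ x : ProjLim X p, IsContStarHom X p (evalAt X p x)) ∧
    Function.Injective (evalAt X p) ∧
    (∀ h : Cyl X p → ℂ, IsContStarHom X p h → ∃ x : ProjLim X p, evalAt X p x = h) :=
  evalAt_bijective_onto_spectrum_general X p hp_cont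
end

section
/- Let (μ_S)_{S∈L} be a consistent family of regular Borel probability measures on the members X_S of a compact Hausdorff projective family. Then there exists a unique regular Borel probability measure μ on the projective limit X̄ such that (p_S)_* μ = μ_S for every S ∈ L. -/
open MeasureTheory

/-!
Open cylinders `p_S⁻¹' W` over open `W ⊆ X_S` form a basis of the projective limit, directed in
`S`, so by compactness every compact set inside an open `U` already lies in one open cylinder
inside `U`. Hence inner regularity reduces a regular measure to its values on open cylinders,
which its projections determine: this gives uniqueness. For existence, set
`λ K = ⨅ μ_S W` over open cylinders `p_S⁻¹' W ⊇ K`. Consistency lets one compare covers at a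
common level, and since the projections `p_S` of the limit are onto, disjoint compacts are
separated by disjoint cylinders; so `λ` is a content.
Its regular measure gives the cylinder over an open `W` the mass `μ_S W`, by inner regularity
of `μ_S`, hence has the marginals `μ_S`.
-/

lemma existsUnique_isProbabilityMeasure_regular_of_subsingleton {α : Type*} [TopologicalSpace α]
    [MeasurableSpace α] [BorelSpace α] [Subsingleton α] [Nonempty α] :
    ∃! μ : Measure α, IsProbabilityMeasure μ ∧ μ.Regular := by
  refine ⟨Measure.dirac (Classical.arbitrary α), ⟨inferInstance, inferInstance⟩,
    fun ν ⟨_, _⟩ => Measure.ext fun s _ => ?_⟩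
  rcases s.eq_empty_or_nonempty with rfl | hs
  · simp
  · simp [hs.eq_univ]

namespace ProjLim

open Set Function TopologicalSpace
open scoped ENNReal

variable {L : Type*} [PartialOrder L] {X : L → Type*} {p : ∀ S S', S ≤ S' → X S' → X S}

def proj (p : ∀ S S', S ≤ S' → X S' → X S) (S : L) (x : ProjLim X p) : X S := x.1 S

lemma map_proj {S S' : L} (h : S ≤ S') (x : ProjLim X p) : p S S' h (proj p S' x) = proj p S x :=
  x.2 S S' h

lemma proj_preimage_preimage {S S' : L} (h : S ≤ S') (W : Set (X S)) :
    proj p S' ⁻¹' (p S S' h ⁻¹' W) = proj p S ⁻¹' W := by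
  ext x; simp only [mem_preimage, map_proj]

lemma measure_preimage_of_consistent [∀ S, MeasurableSpace (X S)] {μS : ∀ S, Measure (X S)}
    (hp_meas : ∀ S S' (h : S ≤ S'), Measurable (p S S' h))
    (hcons : ∀ (S S' : L) (h : S ≤ S'), (μS S').map (p S S' h) = μS S)
    {S S' : L} (h : S ≤ S') {A : Set (X S)} (hA : MeasurableSet A) :
    μS S' (p S S' h ⁻¹' A) = μS S A := by
  rw [← hcons S S' h, Measure.map_apply (hp_meas S S' h) hA]

variable [∀ S, TopologicalSpace (X S)]

lemma continuous_proj (S : L) : Continuous (proj p S) :=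
  (continuous_apply S).comp continuous_subtype_val

instance [∀ S, T2Space (X S)] : T2Space (ProjLim X p) :=
  inferInstanceAs (T2Space {x : ∀ S, X S // ∀ S S' (h : S ≤ S'), p S S' h (x S') = x S})

lemma isClosed_setOf_map_eq [∀ S, T2Space (X S)]
    (hp_cont : ∀ S S' (h : S ≤ S'), Continuous (p S S' h)) {S S' : L} (h : S ≤ S') :
    IsClosed {x : ∀ T, X T | p S S' h (x S') = x S} :=
  isClosed_eq ((hp_cont S S' h).comp (continuous_apply S')) (continuous_apply S)

lemma compactSpace [∀ S, CompactSpace (X S)] [∀ S, T2Space (X S)]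
    (hp_cont : ∀ S S' (h : S ≤ S'), Continuous (p S S' h)) : CompactSpace (ProjLim X p) := by
  have : IsClosed {x : ∀ S, X S | ∀ S S' (h : S ≤ S'), p S S' h (x S') = x S} := by
    simp only [ofPred_forall]
    exact isClosed_iInter fun S => isClosed_iInter fun S' => isClosed_iInter fun h =>
      isClosed_setOf_map_eq hp_cont h
  exact isCompact_iff_compactSpace.mp this.isCompact

section Directed

variable [IsDirected L (· ≤ ·)]

-- A point over `y` lies in the intersection of the compact sets `F U` of families over `y`
-- that are compatible below `U`; these decrease in `U`, and each is nonempty by surjectivity.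
theorem proj_surjective [∀ S, CompactSpace (X S)] [∀ S, T2Space (X S)] [∀ S, Nonempty (X S)]
    (hp_cont : ∀ S S' (h : S ≤ S'), Continuous (p S S' h))
    (hp_surj : ∀ S S' (h : S ≤ S'), Surjective (p S S' h))
    (hp_comp : ∀ S S' S'' (h : S ≤ S') (h' : S' ≤ S''),
      p S S' h ∘ p S' S'' h' = p S S'' (h.trans h'))
    (S : L) : Surjective (proj p S) := by
  intro y
  let F : L → Set (∀ T, X T) := fun U =>
    {x | x S = y ∧ ∀ T T' (h : T ≤ T'), T' ≤ U → p T T' h (x T') = x T}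
  have F_antitone : Antitone F := fun U V hUV x hx =>
    ⟨hx.1, fun T T' h hT' => hx.2 T T' h (hT'.trans hUV)⟩
  have F_closed : ∀ U, IsClosed (F U) := fun U => by
    simp only [F, ofPred_and, ofPred_forall]
    exact (isClosed_eq (continuous_apply S) continuous_const).inter <| isClosed_iInter fun T =>
      isClosed_iInter fun T' => isClosed_iInter fun h => isClosed_iInter fun _ =>
        isClosed_setOf_map_eq hp_cont h
  have F_nonempty : ∀ U, (F U).Nonempty := by
    intro U
    obtain ⟨W, hUW, hSW⟩ := directed_of (· ≤ ·) U S
    obtain ⟨z, rfl⟩ := hp_surj S W hSW y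
    classical
    refine ⟨fun T => if h : T ≤ W then p T W h z else Classical.arbitrary _, by simp [hSW], ?_⟩
    intro T T' h hT'
    simp only [dif_pos (hT'.trans hUW), dif_pos (h.trans (hT'.trans hUW)),
      ← hp_comp T T' W h (hT'.trans hUW), comp_apply]
  have : Nonempty L := ⟨S⟩
  obtain ⟨x, hx⟩ := IsCompact.nonempty_iInter_of_directed_nonempty_isCompact_isClosed F
    F_antitone.directed_ge F_nonempty (fun U => (F_closed U).isCompact) F_closed
  rw [mem_iInter] at hx
  exact ⟨⟨x, fun T T' h => (hx T').2 T T' h le_rfl⟩, (hx S).1⟩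

variable [Nonempty L] (hp_cont : ∀ S S' (h : S ≤ S'), Continuous (p S S' h))
include hp_cont

lemma exists_proj_preimage_subset_of_mem {U : Set (ProjLim X p)} (hU : IsOpen U)
    {x : ProjLim X p} (hx : x ∈ U) :
    ∃ (S : L) (W : Set (X S)), IsOpen W ∧ proj p S x ∈ W ∧ proj p S ⁻¹' W ⊆ U := by
  obtain ⟨V, hV, rfl⟩ := isOpen_induced_iff.mp hU
  obtain ⟨I, u, hu, hIV⟩ := isOpen_pi_iff.mp hV x.1 hx
  obtain ⟨S, hS⟩ := I.exists_le
  refine ⟨S, ⋂ T : I, p T S (hS T T.2) ⁻¹' u T, ?_, ?_, fun z hz => hIV fun T hT => ?_⟩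
  · exact isOpen_iInter_of_finite fun T => (hu T T.2).1.preimage (hp_cont T S _)
  · simp only [mem_iInter, mem_preimage, map_proj]
    exact fun T => (hu T T.2).2
  · simp only [mem_iInter, mem_preimage, map_proj] at hz
    exact hz ⟨T, hT⟩

-- For each level `S` take the largest open `W S` whose cylinder lies in `U`; these cylinders
-- increase with `S` and cover `U`, so by compactness one of them contains `K`.
theorem exists_proj_preimage_between {K U : Set (ProjLim X p)} (hK : IsCompact K)
    (hU : IsOpen U) (hKU : K ⊆ U) :
    ∃ (S : L) (W : Set (X S)), IsOpen W ∧ K ⊆ proj p S ⁻¹' W ∧ proj p S ⁻¹' W ⊆ U := by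
  let W : ∀ S, Set (X S) := fun S => ⋃₀ {V | IsOpen V ∧ proj p S ⁻¹' V ⊆ U}
  have W_open : ∀ S, IsOpen (W S) := fun S => isOpen_sUnion fun V hV => hV.1
  have W_subset : ∀ S, proj p S ⁻¹' W S ⊆ U := fun S => by
    simp [W, preimage_sUnion]
  have W_mono : Monotone fun S => proj p S ⁻¹' W S := by
    intro S S' h
    change proj p S ⁻¹' W S ⊆ proj p S' ⁻¹' W S'
    rw [← proj_preimage_preimage h]
    refine preimage_mono (subset_sUnion_of_mem ⟨(W_open S).preimage (hp_cont S S' h), ?_⟩)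
    rw [proj_preimage_preimage h]
    exact W_subset S
  have W_cover : U ⊆ ⋃ S, proj p S ⁻¹' W S := fun x hx => by
    obtain ⟨S, V, hV, hxV, hVU⟩ := exists_proj_preimage_subset_of_mem hp_cont hU hx
    exact mem_iUnion.mpr ⟨S, mem_sUnion_of_mem hxV ⟨hV, hVU⟩⟩
  obtain ⟨S, hS⟩ := hK.elim_directed_cover _ (fun S => (W_open S).preimage (continuous_proj S))
    (hKU.trans W_cover) W_mono.directed_le
  exact ⟨S, W S, W_open S, hS, W_subset S⟩

theorem exists_disjoint_proj_preimages [∀ S, T2Space (X S)]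
    (hπ : ∀ S, Surjective (proj p S)) {K₁ K₂ : Set (ProjLim X p)} (hK₁ : IsCompact K₁)
    (hK₂ : IsCompact K₂) (hK : Disjoint K₁ K₂) :
    ∃ (S : L) (V₁ V₂ : Set (X S)), IsOpen V₁ ∧ IsOpen V₂ ∧ Disjoint V₁ V₂ ∧
      K₁ ⊆ proj p S ⁻¹' V₁ ∧ K₂ ⊆ proj p S ⁻¹' V₂ := by
  obtain ⟨U₁, U₂, hU₁, hU₂, hKU₁, hKU₂, hU⟩ := SeparatedNhds.of_isCompact_isCompact hK₁ hK₂ hK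
  obtain ⟨S₁, W₁, hW₁, hKW₁, hWU₁⟩ := exists_proj_preimage_between hp_cont hK₁ hU₁ hKU₁
  obtain ⟨S₂, W₂, hW₂, hKW₂, hWU₂⟩ := exists_proj_preimage_between hp_cont hK₂ hU₂ hKU₂
  obtain ⟨S, h₁, h₂⟩ := directed_of (· ≤ ·) S₁ S₂
  refine ⟨S, p S₁ S h₁ ⁻¹' W₁, p S₂ S h₂ ⁻¹' W₂, hW₁.preimage (hp_cont S₁ S h₁),
    hW₂.preimage (hp_cont S₂ S h₂), Disjoint.of_preimage (hπ S) ?_, ?_, ?_⟩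
  · rw [proj_preimage_preimage, proj_preimage_preimage]
    exact hU.mono hWU₁ hWU₂
  · rwa [proj_preimage_preimage]
  · rwa [proj_preimage_preimage]

section Uniqueness

variable [MeasurableSpace (ProjLim X p)] [OpensMeasurableSpace (ProjLim X p)]
    [∀ S, MeasurableSpace (X S)] [∀ S, BorelSpace (X S)] {ν₁ ν₂ : Measure (ProjLim X p)}

lemma measure_le_of_map_proj_eq [ν₁.Regular]
    (h : ∀ S, ν₁.map (proj p S) = ν₂.map (proj p S)) {U : Set (ProjLim X p)} (hU : IsOpen U) :
    ν₁ U ≤ ν₂ U := by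
  refine le_of_forall_lt fun r hr => ?_
  obtain ⟨K, hKU, hK, hrK⟩ := Measure.Regular.innerRegular hU r hr
  obtain ⟨S, W, hW, hKW, hWU⟩ := exists_proj_preimage_between hp_cont hK hU hKU
  have hproj := (continuous_proj (p := p) S).measurable
  calc r < ν₁ K := hrK
    _ ≤ ν₁ (proj p S ⁻¹' W) := measure_mono hKW
    _ = ν₂ (proj p S ⁻¹' W) := by
      rw [← Measure.map_apply hproj hW.measurableSet, h S, Measure.map_apply hproj hW.measurableSet]
    _ ≤ ν₂ U := measure_mono hWU

theorem ext_of_map_proj_eq [ν₁.Regular] [ν₂.Regular]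
    (h : ∀ S, ν₁.map (proj p S) = ν₂.map (proj p S)) : ν₁ = ν₂ :=
  Measure.OuterRegular.ext_isOpen fun _ hU =>
    (measure_le_of_map_proj_eq hp_cont h hU).antisymm
      (measure_le_of_map_proj_eq hp_cont (fun S => (h S).symm) hU)

end Uniqueness

end Directed

section Cover

structure CylinderCover (p : ∀ S S', S ≤ S' → X S' → X S) (K : Set (ProjLim X p)) where
  level : L
  base : Set (X level)
  isOpen_base : IsOpen base
  subset_preimage : K ⊆ proj p level ⁻¹' base

instance [Nonempty L] (K : Set (ProjLim X p)) : Nonempty (CylinderCover p K) :=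
  ⟨⟨Classical.arbitrary L, univ, isOpen_univ, subset_univ K⟩⟩

variable [∀ S, MeasurableSpace (X S)] (μS : ∀ S, Measure (X S))

noncomputable def cylinderInf (K : Set (ProjLim X p)) : ℝ≥0∞ :=
  ⨅ c : CylinderCover p K, μS c.level c.base

lemma cylinderInf_le {K : Set (ProjLim X p)} (c : CylinderCover p K) :
    cylinderInf μS K ≤ μS c.level c.base :=
  iInf_le _ c

lemma cylinderInf_mono {K₁ K₂ : Set (ProjLim X p)} (h : K₁ ⊆ K₂) :
    cylinderInf μS K₁ ≤ cylinderInf μS K₂ :=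
  le_iInf fun c => cylinderInf_le μS ⟨c.level, c.base, c.isOpen_base, h.trans c.subset_preimage⟩

lemma cylinderInf_ne_top [Nonempty L] [∀ S, IsFiniteMeasure (μS S)] (K : Set (ProjLim X p)) :
    cylinderInf μS K ≠ ∞ :=
  ((cylinderInf_le μS (Classical.arbitrary _)).trans_lt (measure_lt_top _ _)).ne

variable [IsDirected L (· ≤ ·)] [∀ S, BorelSpace (X S)]
    (hp_cont : ∀ S S' (h : S ≤ S'), Continuous (p S S' h))
    (hcons : ∀ (S S' : L) (h : S ≤ S'), (μS S').map (p S S' h) = μS S)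
include hp_cont hcons

lemma cylinderInf_union_le (K₁ K₂ : Set (ProjLim X p)) :
    cylinderInf μS (K₁ ∪ K₂) ≤ cylinderInf μS K₁ + cylinderInf μS K₂ := by
  refine ENNReal.le_iInf_add_iInf fun c₁ c₂ => ?_
  obtain ⟨S, h₁, h₂⟩ := directed_of (· ≤ ·) c₁.level c₂.level
  let B₁ := p c₁.level S h₁ ⁻¹' c₁.base
  let B₂ := p c₂.level S h₂ ⁻¹' c₂.base
  have hB : K₁ ∪ K₂ ⊆ proj p S ⁻¹' (B₁ ∪ B₂) := by
    rw [preimage_union, proj_preimage_preimage, proj_preimage_preimage]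
    exact union_subset_union c₁.subset_preimage c₂.subset_preimage
  have hp_meas S S' h := (hp_cont S S' h).measurable
  calc cylinderInf μS (K₁ ∪ K₂)
      ≤ μS S (B₁ ∪ B₂) := cylinderInf_le μS ⟨S, B₁ ∪ B₂,
        (c₁.isOpen_base.preimage (hp_cont _ S h₁)).union
          (c₂.isOpen_base.preimage (hp_cont _ S h₂)), hB⟩
    _ ≤ μS S B₁ + μS S B₂ := measure_union_le _ _
    _ = μS c₁.level c₁.base + μS c₂.level c₂.base := by
      rw [measure_preimage_of_consistent hp_meas hcons h₁ c₁.isOpen_base.measurableSet,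
        measure_preimage_of_consistent hp_meas hcons h₂ c₂.isOpen_base.measurableSet]

variable (hπ : ∀ S, Surjective (proj p S))
include hπ

lemma measure_le_cylinderInf_proj_preimage {S : L} {A : Set (X S)} (hA : MeasurableSet A) :
    μS S A ≤ cylinderInf μS (proj p S ⁻¹' A) := by
  refine le_iInf fun c => ?_
  obtain ⟨T, hST, hcT⟩ := directed_of (· ≤ ·) S c.level
  have hAc : p S T hST ⁻¹' A ⊆ p c.level T hcT ⁻¹' c.base := by
    rw [← (hπ T).preimage_subset_preimage_iff, proj_preimage_preimage, proj_preimage_preimage]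
    exact c.subset_preimage
  have hp_meas S S' h := (hp_cont S S' h).measurable
  calc μS S A = μS T (p S T hST ⁻¹' A) :=
        (measure_preimage_of_consistent hp_meas hcons hST hA).symm
    _ ≤ μS T (p c.level T hcT ⁻¹' c.base) := measure_mono hAc
    _ = μS c.level c.base :=
        measure_preimage_of_consistent hp_meas hcons hcT c.isOpen_base.measurableSet

-- Separate `K₁` and `K₂` by disjoint open cylinders at one level and intersect them with a
-- cover of `K₁ ∪ K₂` lifted to a common level.
lemma cylinderInf_add_le_union [Nonempty L] [∀ S, T2Space (X S)] {K₁ K₂ : Set (ProjLim X p)}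
    (hK₁ : IsCompact K₁) (hK₂ : IsCompact K₂) (hK : Disjoint K₁ K₂) :
    cylinderInf μS K₁ + cylinderInf μS K₂ ≤ cylinderInf μS (K₁ ∪ K₂) := by
  obtain ⟨S, V₁, V₂, hV₁, hV₂, hV, hKV₁, hKV₂⟩ :=
    exists_disjoint_proj_preimages hp_cont hπ hK₁ hK₂ hK
  refine le_iInf fun c => ?_
  obtain ⟨T, hST, hcT⟩ := directed_of (· ≤ ·) S c.level
  let B := p c.level T hcT ⁻¹' c.base
  have hB : IsOpen B := c.isOpen_base.preimage (hp_cont _ T hcT)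
  have hKB : K₁ ∪ K₂ ⊆ proj p T ⁻¹' B := by
    rw [proj_preimage_preimage]
    exact c.subset_preimage
  let A₁ := p S T hST ⁻¹' V₁ ∩ B
  let A₂ := p S T hST ⁻¹' V₂ ∩ B
  have hA₁ : K₁ ⊆ proj p T ⁻¹' A₁ := by
    rw [preimage_inter, proj_preimage_preimage]
    exact subset_inter hKV₁ (subset_union_left.trans hKB)
  have hA₂ : K₂ ⊆ proj p T ⁻¹' A₂ := by
    rw [preimage_inter, proj_preimage_preimage]
    exact subset_inter hKV₂ (subset_union_right.trans hKB)
  have hA₂_open : IsOpen A₂ := (hV₂.preimage (hp_cont S T hST)).inter hB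
  have hp_meas S S' h := (hp_cont S S' h).measurable
  calc cylinderInf μS K₁ + cylinderInf μS K₂ ≤ μS T A₁ + μS T A₂ :=
        add_le_add (cylinderInf_le μS ⟨T, A₁, (hV₁.preimage (hp_cont S T hST)).inter hB, hA₁⟩)
          (cylinderInf_le μS ⟨T, A₂, hA₂_open, hA₂⟩)
    _ = μS T (A₁ ∪ A₂) :=
        (measure_union ((hV.preimage _).mono inter_subset_left inter_subset_left)
          hA₂_open.measurableSet).symm
    _ ≤ μS T B := measure_mono (union_subset inter_subset_right inter_subset_right)
    _ = μS c.level c.base :=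
        measure_preimage_of_consistent hp_meas hcons hcT c.isOpen_base.measurableSet

variable [Nonempty L] [∀ S, T2Space (X S)] [∀ S, IsFiniteMeasure (μS S)]

noncomputable def cylinderContent : Content (ProjLim X p) where
  toFun K := (cylinderInf μS (K : Set (ProjLim X p))).toNNReal
  mono' _ _ h := ENNReal.toNNReal_mono (cylinderInf_ne_top μS _) (cylinderInf_mono μS h)
  sup_disjoint' K₁ K₂ hK _ _ := by
    rw [Compacts.coe_sup, ← ENNReal.toNNReal_add (cylinderInf_ne_top μS _)
      (cylinderInf_ne_top μS _)]
    congr 1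
    exact (cylinderInf_union_le μS hp_cont hcons _ _).antisymm
      (cylinderInf_add_le_union μS hp_cont hcons hπ K₁.isCompact K₂.isCompact hK)
  sup_le' K₁ K₂ := by
    rw [Compacts.coe_sup, ← ENNReal.toNNReal_add (cylinderInf_ne_top μS _)
      (cylinderInf_ne_top μS _)]
    exact ENNReal.toNNReal_mono
      (ENNReal.add_ne_top.mpr ⟨cylinderInf_ne_top μS _, cylinderInf_ne_top μS _⟩)
      (cylinderInf_union_le μS hp_cont hcons _ _)

lemma cylinderContent_apply (K : Compacts (ProjLim X p)) :
    cylinderContent μS hp_cont hcons hπ K = cylinderInf μS (K : Set (ProjLim X p)) :=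
  ENNReal.coe_toNNReal (cylinderInf_ne_top μS _)

variable [∀ S, CompactSpace (X S)] [∀ S, (μS S).Regular]
    [MeasurableSpace (ProjLim X p)] [BorelSpace (ProjLim X p)]

theorem cylinderContent_measure_proj_preimage {S : L} {W : Set (X S)} (hW : IsOpen W) :
    (cylinderContent μS hp_cont hcons hπ).measure (proj p S ⁻¹' W) = μS S W := by
  have hW' : IsOpen (proj p S ⁻¹' W) := hW.preimage (continuous_proj S)
  rw [Content.measure_apply _ hW'.measurableSet, Content.outerMeasure_of_isOpen _ _ hW']
  refine le_antisymm (iSup₂_le fun K hK => ?_) (le_of_forall_lt fun r hr => ?_)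
  · rw [cylinderContent_apply]
    exact cylinderInf_le μS ⟨S, W, hW, hK⟩
  · obtain ⟨C, hCW, hC, hrC⟩ := Measure.Regular.innerRegular hW r hr
    have := compactSpace hp_cont
    let K : Compacts (ProjLim X p) :=
      ⟨proj p S ⁻¹' C, (hC.isClosed.preimage (continuous_proj S)).isCompact⟩
    calc r < μS S C := hrC
      _ ≤ cylinderInf μS (K : Set (ProjLim X p)) :=
        measure_le_cylinderInf_proj_preimage μS hp_cont hcons hπ hC.isClosed.measurableSet
      _ = cylinderContent μS hp_cont hcons hπ K := (cylinderContent_apply ..).symm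
      _ ≤ _ := Content.le_innerContent _ K ⟨_, hW'⟩ (preimage_mono hCW :)

theorem map_proj_cylinderContent_measure (S : L) :
    (cylinderContent μS hp_cont hcons hπ).measure.map (proj p S) = μS S := by
  have h_open : ∀ W, IsOpen W →
      μS S W = (cylinderContent μS hp_cont hcons hπ).measure.map (proj p S) W := fun W hW => by
    rw [Measure.map_apply (continuous_proj S).measurable hW.measurableSet,
      cylinderContent_measure_proj_preimage μS hp_cont hcons hπ hW]
  exact (ext_of_generate_finite _ BorelSpace.measurable_eq isPiSystem_isOpen h_open
    (h_open univ isOpen_univ)).symm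

end Cover

end ProjLim

theorem exists_unique_measure_of_consistent_family_general
    {L : Type*} [PartialOrder L] [IsDirected L (· ≤ ·)]
    (X : L → Type*) [∀ S, TopologicalSpace (X S)]
    [∀ S, CompactSpace (X S)] [∀ S, T2Space (X S)] [∀ S, Nonempty (X S)]
    [∀ S, MeasurableSpace (X S)] [∀ S, BorelSpace (X S)]
    (p : ∀ S S', S ≤ S' → X S' → X S)
    (hp_cont : ∀ S S' (h : S ≤ S'), Continuous (p S S' h))
    (hp_surj : ∀ S S' (h : S ≤ S'), Function.Surjective (p S S' h))
    (hp_comp : ∀ S S' S'' (h : S ≤ S') (h' : S' ≤ S''),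
      p S S' h ∘ p S' S'' h' = p S S'' (h.trans h'))
    [MeasurableSpace (ProjLim X p)] [BorelSpace (ProjLim X p)]
    (μS : ∀ S : L, Measure (X S))
    (hprob : ∀ S, IsProbabilityMeasure (μS S))
    (hregS : ∀ S, (μS S).Regular)
    (hcons : ∀ (S S' : L) (h : S ≤ S'), (μS S').map (p S S' h) = μS S) :
    ∃! μ : Measure (ProjLim X p),
      IsProbabilityMeasure μ ∧ μ.Regular ∧
        ∀ S : L, μ.map (fun x : ProjLim X p => x.1 S) = μS S := by
  rcases isEmpty_or_nonempty L with _ | _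
  · have : Subsingleton (ProjLim X p) := ⟨fun x y => Subtype.ext (funext isEmptyElim)⟩
    have : Nonempty (ProjLim X p) := ⟨⟨isEmptyElim, isEmptyElim⟩⟩
    simpa using existsUnique_isProbabilityMeasure_regular_of_subsingleton (α := ProjLim X p)
  have := ProjLim.compactSpace hp_cont
  have hπ := ProjLim.proj_surjective hp_cont hp_surj hp_comp
  let μ := (ProjLim.cylinderContent μS hp_cont hcons hπ).measure
  have hμ : ∀ S, μ.map (ProjLim.proj p S) = μS S :=
    ProjLim.map_proj_cylinderContent_measure μS hp_cont hcons hπ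
  have : IsProbabilityMeasure μ := by
    let S := Classical.arbitrary L
    have : IsProbabilityMeasure (μ.map (ProjLim.proj p S)) := hμ S ▸ hprob S
    exact Measure.isProbabilityMeasure_of_map (ProjLim.proj p S)
  refine ⟨μ, ⟨this, inferInstance, hμ⟩, fun ν ⟨_, _, hν⟩ => ?_⟩
  exact ProjLim.ext_of_map_proj_eq hp_cont fun S => (hν S).trans (hμ S).symm

/-- A consistent family `(μ_S)` of regular Borel probability measures on
the members of a compact Hausdorff projective family comes from a unique regular Borel
probability measure `μ` on the projective limit: `(p_S)_* μ = μ_S` for all `S`. -/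
theorem exists_unique_measure_of_consistent_family
    {L : Type*} [PartialOrder L] [IsDirected L (· ≤ ·)]
    (X : L → Type*) [∀ S, TopologicalSpace (X S)]
    [∀ S, CompactSpace (X S)] [∀ S, T2Space (X S)] [∀ S, Nonempty (X S)]
    [∀ S, MeasurableSpace (X S)] [∀ S, BorelSpace (X S)]
    (p : ∀ S S', S ≤ S' → X S' → X S)
    (hp_cont : ∀ S S' (h : S ≤ S'), Continuous (p S S' h))
    (hp_surj : ∀ S S' (h : S ≤ S'), Function.Surjective (p S S' h))
    (hp_id : ∀ S, p S S le_rfl = id)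
    (hp_comp : ∀ S S' S'' (h : S ≤ S') (h' : S' ≤ S''),
      p S S' h ∘ p S' S'' h' = p S S'' (h.trans h'))
    [MeasurableSpace (ProjLim X p)] [BorelSpace (ProjLim X p)]
    (μS : ∀ S : L, Measure (X S))
    (hprob : ∀ S, IsProbabilityMeasure (μS S))
    (hregS : ∀ S, (μS S).Regular)
    (hcons : ∀ (S S' : L) (h : S ≤ S'), (μS S').map (p S S' h) = μS S) :
    ∃! μ : Measure (ProjLim X p),
      IsProbabilityMeasure μ ∧ μ.Regular ∧
        ∀ S : L, μ.map (fun x : ProjLim X p => x.1 S) = μS S :=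
  exists_unique_measure_of_consistent_family_general X p hp_cont hp_surj hp_comp μS hprob hregS
    hcons
end

section
/- Let μ be a regular Borel probability measure on the projective limit X̄ of a compact Hausdorff projective family. Then μ is faithful (every nonempty open subset of X̄ has strictly positive μ-measure) if and only if for every S ∈ L the pushforward measure (p_S)_* μ on X_S is faithful. -/
open MeasureTheory

/-- The canonical projection of the projective limit of a compact Hausdorff projective
family (with surjective bonding maps) onto each factor is surjective. -/
theorem projLim_proj_surjective
    {L : Type*} [PartialOrder L] [IsDirected L (· ≤ ·)]
    (X : L → Type*) [∀ S, TopologicalSpace (X S)]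
    [∀ S, CompactSpace (X S)] [∀ S, T2Space (X S)] [∀ S, Nonempty (X S)]
    (p : ∀ S S', S ≤ S' → X S' → X S)
    (hp_cont : ∀ S S' (h : S ≤ S'), Continuous (p S S' h))
    (hp_surj : ∀ S S' (h : S ≤ S'), Function.Surjective (p S S' h))
    (hp_comp : ∀ S S' S'' (h : S ≤ S') (h' : S' ≤ S''),
      p S S' h ∘ p S' S'' h' = p S S'' (h.trans h'))
    (S₀ : L) : Function.Surjective (fun x : ProjLim X p => x.1 S₀) := by
  classical
  intro y
  have : Nonempty L := ⟨S₀⟩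
  -- index type of constraints
  set ι := (S : L) ×' (S' : L) ×' PLift (S ≤ S') with hι
  set B : Set (∀ S, X S) := {x | x S₀ = y} with hB
  set Z : ι → Set (∀ S, X S) := fun i => {x | p i.1 i.2.1 i.2.2.down (x i.2.1) = x i.1} with hZ
  have hBc : IsCompact B := by
    have : IsClosed B := isClosed_singleton.preimage (continuous_apply S₀)
    exact this.isCompact
  have hZc : ∀ i, IsClosed (Z i) :=
    fun i => isClosed_eq ((hp_cont _ _ _).comp (continuous_apply _)) (continuous_apply _)
  have hfin : ∀ u : Finset ι, (B ∩ ⋂ i ∈ u, Z i).Nonempty := by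
    intro u
    obtain ⟨T, hT⟩ := Finset.exists_le (insert S₀ (u.image fun i => i.2.1))
    have hS₀T : S₀ ≤ T := hT _ (Finset.mem_insert_self _ _)
    obtain ⟨t₀, ht₀⟩ := hp_surj S₀ T hS₀T y
    refine ⟨fun S => if h : S ≤ T then p S T h t₀ else Classical.arbitrary _, ?_, ?_⟩
    · simp [B, hS₀T, ht₀]
    · simp only [Set.mem_iInter]
      intro i hi
      have h2 : i.2.1 ≤ T := hT _ (Finset.mem_insert_of_mem (Finset.mem_image_of_mem _ hi))
      have h1 : i.1 ≤ T := i.2.2.down.trans h2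
      simp only [Z, Set.mem_setOf_eq, dif_pos h1, dif_pos h2]
      exact congrFun (hp_comp i.1 i.2.1 T i.2.2.down h2) t₀
  obtain ⟨x, hxB, hxZ⟩ := hBc.inter_iInter_nonempty Z hZc hfin
  simp only [Set.mem_iInter] at hxZ
  exact ⟨⟨x, fun S S' h => hxZ ⟨S, S', ⟨h⟩⟩⟩, hxB⟩

/-- A regular Borel probability measure `μ` on the projective limit is
faithful (every nonempty open set has positive measure) if and only if each pushforward
`(p_S)_* μ` is faithful. -/
theorem faithful_iff_pushforwards_faithful
    {L : Type*} [PartialOrder L] [IsDirected L (· ≤ ·)]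
    (X : L → Type*) [∀ S, TopologicalSpace (X S)]
    [∀ S, CompactSpace (X S)] [∀ S, T2Space (X S)] [∀ S, Nonempty (X S)]
    [∀ S, MeasurableSpace (X S)] [∀ S, BorelSpace (X S)]
    (p : ∀ S S', S ≤ S' → X S' → X S)
    (hp_cont : ∀ S S' (h : S ≤ S'), Continuous (p S S' h))
    (hp_surj : ∀ S S' (h : S ≤ S'), Function.Surjective (p S S' h))
    (hp_id : ∀ S, p S S le_rfl = id)
    (hp_comp : ∀ S S' S'' (h : S ≤ S') (h' : S' ≤ S''),
      p S S' h ∘ p S' S'' h' = p S S'' (h.trans h'))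
    [MeasurableSpace (ProjLim X p)] [BorelSpace (ProjLim X p)]
    (μ : Measure (ProjLim X p)) [IsProbabilityMeasure μ] (hreg : μ.Regular) :
    (∀ U : Set (ProjLim X p), IsOpen U → U.Nonempty → 0 < μ U) ↔
      ∀ (S : L) (U : Set (X S)), IsOpen U → U.Nonempty →
        0 < (μ.map (fun x : ProjLim X p => x.1 S)) U := by
  classical
  have hcont : ∀ S : L, Continuous (fun x : ProjLim X p => x.1 S) :=
    fun S => (continuous_apply S).comp continuous_subtype_val
  constructor
  · intro hfaith S U hU hUne
    rw [Measure.map_apply (hcont S).measurable hU.measurableSet]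
    apply hfaith _ (hU.preimage (hcont S))
    obtain ⟨y, hy⟩ := hUne
    obtain ⟨x, hx⟩ := projLim_proj_surjective X p hp_cont hp_surj hp_comp S y
    exact ⟨x, by simpa [hx] using hy⟩
  · intro hpush U hU hUne
    obtain ⟨x, hxU⟩ := hUne
    by_cases hL : Nonempty L
    · obtain ⟨W, hW, hWU⟩ := isOpen_induced_iff.mp hU
      have hxW : x.1 ∈ W := by rw [← hWU] at hxU; exact hxU
      obtain ⟨I, u, hI, hIW⟩ := isOpen_pi_iff.mp hW x.1 hxW
      obtain ⟨T, hT⟩ := Finset.exists_le I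
      set V : Set (X T) := ⋂ i : {i // i ∈ I}, (p i.1 T (hT i.1 i.2)) ⁻¹' u i.1 with hV
      have hVopen : IsOpen V :=
        isOpen_iInter_of_finite fun i => (hI i.1 i.2).1.preimage (hp_cont _ _ _)
      have hVne : V.Nonempty := by
        refine ⟨x.1 T, Set.mem_iInter.mpr fun i => ?_⟩
        have := x.2 i.1 T (hT i.1 i.2)
        simp only [Set.mem_preimage, this]
        exact (hI i.1 i.2).2
      have hsub : (fun z : ProjLim X p => z.1 T) ⁻¹' V ⊆ U := by
        intro z hz
        rw [← hWU]
        apply hIW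
        intro i hi
        have hz2 := z.2 i T (hT i hi)
        have : p i T (hT i hi) (z.1 T) ∈ u i :=
          Set.mem_iInter.mp hz ⟨i, hi⟩
        rwa [hz2] at this
      have h1 : 0 < μ.map (fun z : ProjLim X p => z.1 T) V := hpush T V hVopen hVne
      rw [Measure.map_apply (hcont T).measurable hVopen.measurableSet] at h1
      exact lt_of_lt_of_le h1 (measure_mono hsub)
    · have : IsEmpty L := not_nonempty_iff.mp hL
      have hUuniv : U = Set.univ := by
        ext z
        simp only [Set.mem_univ, iff_true]
        have : z = x := Subtype.ext (funext fun S => (this.elim S))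
        rwa [this]
      rw [hUuniv]
      simp
end

section
/- Let Γ be a group and G a compact Hausdorff topological group. Let H, H' : Γ → G be group homomorphisms (not assumed continuous) such that for every finitely generated subgroup S of Γ there exists g_S ∈ G with H'(s) = g_S^{-1} H(s) g_S for all s ∈ S. Then there exists a single g ∈ G with H'(γ) = g^{-1} H(γ) g for all γ ∈ Γ; i.e., H and H' are conjugate. -/
/-!
For each `γ`, the elements conjugating `H γ` to `H' γ` form a closed subset of `G`. Conjugacy on
the subgroup generated by a finite set of `γ`s says that these closed sets have the finite
intersection property, so by compactness of `G` they have a common point.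
-/

section CompactConjugacy

variable {G : Type*} [Group G] [TopologicalSpace G] [IsTopologicalGroup G]

theorem isClosed_setOf_conj_eq [T1Space G] (a b : G) : IsClosed {g : G | b = g⁻¹ * a * g} := by
  have hcont : Continuous fun g : G => g⁻¹ * a * g := by fun_prop
  simp_rw [eq_comm (a := b)]
  exact isClosed_singleton.preimage hcont

theorem exists_conj_eq_of_forall_finset [CompactSpace G] [T1Space G] {ι : Type*} (a b : ι → G)
    (h : ∀ s : Finset ι, ∃ g : G, ∀ i ∈ s, b i = g⁻¹ * a i * g) :
    ∃ g : G, ∀ i, b i = g⁻¹ * a i * g := by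
  obtain ⟨g, hg⟩ := CompactSpace.iInter_nonempty (fun i => isClosed_setOf_conj_eq (a i) (b i))
    fun s => by simpa only [Set.nonempty_def, Set.mem_iInter₂, Set.mem_ofPred_eq] using h s
  exact ⟨g, Set.mem_iInter.1 hg⟩

end CompactConjugacy

/-- If two homomorphisms `H, H' : Γ → G` into a compact Hausdorff
topological group are conjugate on every finitely generated subgroup of `Γ`, then they
are conjugate by a single element of `G`. -/
theorem conjugate_of_conjugate_on_fg_subgroups
    {Γ G : Type*} [Group Γ] [Group G] [TopologicalSpace G] [IsTopologicalGroup G]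
    [CompactSpace G] [T2Space G]
    (H H' : Γ →* G)
    (hconj : ∀ S : Subgroup Γ, S.FG → ∃ g : G, ∀ s : S, H' s = g⁻¹ * H s * g) :
    ∃ g : G, ∀ γ : Γ, H' γ = g⁻¹ * H γ * g := by
  refine exists_conj_eq_of_forall_finset H H' fun s => ?_
  obtain ⟨g, hg⟩ := hconj (Subgroup.closure s) ⟨s, rfl⟩
  exact ⟨g, fun γ hγ => hg ⟨γ, Subgroup.subset_closure hγ⟩⟩
end

section
/- Let Γ be a group and G a compact Hausdorff topological group. Suppose that for every finitely generated subgroup S of Γ a group homomorphism h_S : S → G is given, such that whenever S ≤ S' the restriction h_{S'}|_S is conjugate to h_S (there exists g ∈ G with h_{S'}(s) = g^{-1} h_S(s) g for all s ∈ S). Then there exists a group homomorphism H : Γ → G such that for every finitely generated subgroup S of Γ the restriction H|_S is conjugate to h_S. -/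
/-!
Extend each `h_S` by `1` off `S`. These functions form a net in the compact space `Γ → G`,
indexed by the directed set of finitely generated subgroups, and any cluster point works:
multiplicativity at a pair `x, y` and conjugacy to `h_S` on `S` are closed conditions (the latter
because the conjugates of `h_S` form a continuous image of the compact group `G`), and the net
eventually satisfies each of them thanks to the compatibility hypothesis.
-/

open Filter

namespace Subgroup

instance instNonemptyFG {Γ : Type*} [Group Γ] : Nonempty {S : Subgroup Γ // S.FG} :=
  ⟨⟨⊥, ⟨∅, by simp⟩⟩⟩

instance instIsDirectedOrderFG {Γ : Type*} [Group Γ] : IsDirectedOrder {S : Subgroup Γ // S.FG} where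
  directed S T := ⟨⟨S ⊔ T, S.2.sup T.2⟩, le_sup_left (a := S.1), le_sup_right (a := S.1)⟩

lemma fg_closure_pair {Γ : Type*} [Group Γ] (x y : Γ) : (closure {x, y}).FG :=
  (fg_iff _).2 ⟨{x, y}, rfl, Set.toFinite _⟩

end Subgroup

theorem isClosed_setOf_exists_conj {Γ G : Type*} [Group G] [TopologicalSpace G]
    [ContinuousMul G] [ContinuousInv G] [CompactSpace G] [T2Space G] (S : Set Γ) (φ : S → G) :
    IsClosed {f : Γ → G | ∃ g : G, ∀ s : S, f s = g⁻¹ * φ s * g} := by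
  have hconj : IsClosed (Set.range fun (g : G) (s : S) => g⁻¹ * φ s * g) :=
    (isCompact_range (by fun_prop)).isClosed
  convert hconj.preimage (f := fun (f : Γ → G) (s : S) => f s) (by fun_prop) using 1
  ext f
  simp only [Set.mem_ofPred_eq, Set.mem_preimage, Set.mem_range, funext_iff, eq_comm]

/-- Given, for every finitely generated subgroup `S` of `Γ`, a homomorphism
`h_S : S → G` into a compact Hausdorff topological group, such that `h_{S'}|_S` is
conjugate to `h_S` whenever `S ≤ S'`, there is a homomorphism `H : Γ → G` whose
restriction to each finitely generated subgroup `S` is conjugate to `h_S`. -/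
theorem exists_hom_of_conjugacy_compatible_family
    {Γ G : Type*} [Group Γ] [Group G] [TopologicalSpace G] [IsTopologicalGroup G]
    [CompactSpace G] [T2Space G]
    (h : ∀ S : Subgroup Γ, S.FG → (S →* G))
    (hcompat : ∀ (S S' : Subgroup Γ) (hS : S.FG) (hS' : S'.FG) (hle : S ≤ S'),
      ∃ g : G, ∀ s : S, h S' hS' (Subgroup.inclusion hle s) = g⁻¹ * h S hS s * g) :
    ∃ H : Γ →* G, ∀ (S : Subgroup Γ) (hS : S.FG),
      ∃ g : G, ∀ s : S, H s = g⁻¹ * h S hS s * g := by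
  let u : {S : Subgroup Γ // S.FG} → Γ → G := fun S => Function.extend (↑) (h S.1 S.2) 1
  have hu (S : {S : Subgroup Γ // S.FG}) (s : S.1) : u S s = h S.1 S.2 s :=
    Subtype.val_injective.extend_apply _ _ s
  obtain ⟨f, hf⟩ := exists_clusterPt_of_compactSpace (map u atTop)
  have hmul (x y : Γ) : f (x * y) = f x * f y := by
    have hclosed : IsClosed {f : Γ → G | f (x * y) = f x * f y} :=
      isClosed_eq (continuous_apply _) ((continuous_apply x).mul (continuous_apply y))
    refine hclosed.mem_of_mapClusterPt hf ?_
    filter_upwards [eventually_ge_atTop ⟨_, Subgroup.fg_closure_pair x y⟩] with S hS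
    have hx : x ∈ S.1 := hS (Subgroup.subset_closure (by simp))
    have hy : y ∈ S.1 := hS (Subgroup.subset_closure (by simp))
    rw [show x * y = ((⟨x, hx⟩ * ⟨y, hy⟩ : S.1) : Γ) from rfl, hu, hu S ⟨x, hx⟩, hu S ⟨y, hy⟩,
      map_mul]
  refine ⟨MonoidHom.mk' f hmul, fun S hS => ?_⟩
  refine (isClosed_setOf_exists_conj (S : Set Γ) (h S hS)).mem_of_mapClusterPt hf ?_
  filter_upwards [eventually_ge_atTop ⟨S, hS⟩] with S' hle
  obtain ⟨g, hg⟩ := hcompat S S'.1 hS S'.2 hle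
  exact ⟨g, fun s => (hu S' (Subgroup.inclusion hle s)).trans (hg s)⟩
end
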